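/- Consider the secular frequencies of the planetary problem in partially reduced Deprit variables: the eigenvalues s = (s₁,…,s_N) of the horizontal quadratic form Q*_h and z = (z₁,…,z_{N−1}) of the vertical quadratic form Q*_v. Then Σ_{i=1}^N s_i + Σ_{i=1}^{N−1} z_i = 0 (Herman's resonance): equivalently tr(F*_h) + tr(F*_v) = 0, where F*_h, F*_v are the matrices of Q*_h, Q*_v. This follows from tr(F*_v) = tr(F_v) (equality of the traces of the reduced and unreduced vertical forms) combined with the known relation tr(F_h) + tr(F_v) = 0 for the Poincaré–Delaunay forms. -/

import Mathlib

noncomputable def Lsum (Λ : ℕ → ℝ) (j : ℕ) : ℝ := ∑ k ∈ Finset.Icc 1 j, Λ k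

noncomputable def ccoef (Λ : ℕ → ℝ) (j : ℕ) : ℝ :=
  if j = 1 then -Real.sqrt (Λ 2 / (Λ 1 * Lsum Λ 2))
  else Real.sqrt (Lsum Λ (j - 1) / (Lsum Λ j * Λ j))

noncomputable def ctcoef (Λ : ℕ → ℝ) (j : ℕ) : ℝ :=
  if j = 1 then ccoef Λ 1
  else -Real.sqrt (Λ (j + 1) / (Lsum Λ (j + 1) * Lsum Λ j))

/-- The `N × (N-1)` matrix `ℓ` of the linear operator `𝔏`, with `1`-based indices. -/
noncomputable def ellMat (Λ : ℕ → ℝ) (i k : ℕ) : ℝ :=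
  if k + 1 = i then ccoef Λ i else if i ≤ k then ctcoef Λ k else 0

/-!
The columns of `ℓ` satisfy `ℓ ℓᵀ = diag(1/Λᵢ) - (1/L_N) J`, where `J` is the all-ones matrix and
`L_N = Λ₁ + ⋯ + Λ_N`: every entry is a telescoping sum of the squares `1/L_k - 1/L_{k+1}` of the
coefficients `c̃_k`. Hence `tr(ℓᵀ F̂_v ℓ) = tr(F̂_v ℓ ℓᵀ) = Σᵢ (F̂_v)ᵢᵢ/Λᵢ`, the `J`-part being killed
by the vanishing row sums of `F̂_v`, and conjugating `F_h` by the sign matrix `I` does not change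
its trace.
-/

open Finset

theorem Finset.sum_sandwich_eq_of_gram {ι κ R : Type*} [CommRing R] [DecidableEq ι]
    (s : Finset ι) (t : Finset κ) (ℓ : ι → κ → R) (F : ι → ι → R) (d : ι → R) (c : R)
    (hgram : ∀ i ∈ s, ∀ j ∈ s, ∑ k ∈ t, ℓ i k * ℓ j k = (if i = j then d i else 0) - c)
    (hrow : ∀ i ∈ s, ∑ j ∈ s, F i j = 0) :
    ∑ k ∈ t, ∑ i ∈ s, ∑ j ∈ s, ℓ i k * F i j * ℓ j k = ∑ i ∈ s, F i i * d i := by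
  calc ∑ k ∈ t, ∑ i ∈ s, ∑ j ∈ s, ℓ i k * F i j * ℓ j k
      = ∑ i ∈ s, ∑ j ∈ s, F i j * ∑ k ∈ t, ℓ i k * ℓ j k := by
        rw [sum_comm]
        refine sum_congr rfl fun i _ => ?_
        rw [sum_comm]
        simp only [mul_sum]
        exact sum_congr rfl fun j _ => sum_congr rfl fun k _ => by ring
    _ = ∑ i ∈ s, ∑ j ∈ s, F i j * ((if i = j then d i else 0) - c) :=
        sum_congr rfl fun i hi => sum_congr rfl fun j hj => by rw [hgram i hi j hj]
    _ = ∑ i ∈ s, (F i i * d i - (∑ j ∈ s, F i j) * c) := by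
        refine sum_congr rfl fun i hi => ?_
        simp [mul_sub, sum_sub_distrib, sum_mul, mul_ite, hi]
    _ = ∑ i ∈ s, F i i * d i :=
        sum_congr rfl fun i hi => by rw [hrow i hi, zero_mul, sub_zero]

section Coefficients

variable (Λ : ℕ → ℝ)

@[simp]
theorem Lsum_one : Lsum Λ 1 = Λ 1 := by simp [Lsum]

theorem Lsum_succ (k : ℕ) : Lsum Λ (k + 1) = Lsum Λ k + Λ (k + 1) :=
  sum_Icc_succ_top (by omega) Λ

variable {Λ}

theorem Lsum_pos {N : ℕ} (hΛ : ∀ i, 1 ≤ i → i ≤ N → 0 < Λ i) {k : ℕ} (hk : 1 ≤ k)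
    (hkN : k ≤ N) : 0 < Lsum Λ k :=
  sum_pos (fun i hi => hΛ i (mem_Icc.1 hi).1 ((mem_Icc.1 hi).2.trans hkN))
    ⟨1, mem_Icc.2 ⟨le_rfl, hk⟩⟩

theorem ctcoef_of_one_le {k : ℕ} (hk : 1 ≤ k) :
    ctcoef Λ k = -√(Λ (k + 1) / (Lsum Λ (k + 1) * Lsum Λ k)) := by
  rcases hk.eq_or_lt with rfl | hk
  · simp [ctcoef, ccoef, mul_comm]
  · simp [ctcoef, hk.ne']

theorem ccoef_succ {k : ℕ} (hk : 1 ≤ k) :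
    ccoef Λ (k + 1) = √(Lsum Λ k / (Lsum Λ (k + 1) * Λ (k + 1))) := by
  simp [ccoef, show k ≠ 0 by omega]

theorem Lsum_succ_pos {k : ℕ} (hL : 0 < Lsum Λ k) (hΛ : 0 < Λ (k + 1)) :
    0 < Lsum Λ (k + 1) := by
  rw [Lsum_succ]; positivity

theorem ctcoef_sq {k : ℕ} (hk : 1 ≤ k) (hL : 0 < Lsum Λ k) (hΛ : 0 < Λ (k + 1)) :
    ctcoef Λ k ^ 2 = (Lsum Λ k)⁻¹ - (Lsum Λ (k + 1))⁻¹ := by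
  have hL' := Lsum_succ_pos hL hΛ
  rw [ctcoef_of_one_le hk, neg_sq, Real.sq_sqrt (by positivity)]
  field_simp
  rw [Lsum_succ]
  ring

theorem ccoef_succ_sq {k : ℕ} (hk : 1 ≤ k) (hL : 0 < Lsum Λ k) (hΛ : 0 < Λ (k + 1)) :
    ccoef Λ (k + 1) ^ 2 = (Λ (k + 1))⁻¹ - (Lsum Λ (k + 1))⁻¹ := by
  have hL' := Lsum_succ_pos hL hΛ
  rw [ccoef_succ hk, Real.sq_sqrt (by positivity)]
  field_simp
  rw [Lsum_succ]
  ring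

theorem ccoef_succ_mul_ctcoef {k : ℕ} (hk : 1 ≤ k) (hL : 0 < Lsum Λ k) (hΛ : 0 < Λ (k + 1)) :
    ccoef Λ (k + 1) * ctcoef Λ k = -(Lsum Λ (k + 1))⁻¹ := by
  have hL' := Lsum_succ_pos hL hΛ
  rw [ccoef_succ hk, ctcoef_of_one_le hk, mul_neg, ← Real.sqrt_mul (by positivity),
    show Lsum Λ k / (Lsum Λ (k + 1) * Λ (k + 1)) * (Λ (k + 1) / (Lsum Λ (k + 1) * Lsum Λ k))
      = (Lsum Λ (k + 1))⁻¹ ^ 2 by field_simp,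
    Real.sqrt_sq (by positivity)]

end Coefficients
theorem ellMat_of_succ_lt {Λ : ℕ → ℝ} {i k : ℕ} (h : k + 1 < i) : ellMat Λ i k = 0 := by
  rw [ellMat, if_neg (by omega), if_neg (by omega)]

theorem ellMat_of_le {Λ : ℕ → ℝ} {i k : ℕ} (h : i ≤ k) : ellMat Λ i k = ctcoef Λ k := by
  rw [ellMat, if_neg (by omega), if_pos h]

theorem ellMat_succ_self (Λ : ℕ → ℝ) (k : ℕ) : ellMat Λ (k + 1) k = ccoef Λ (k + 1) :=
  if_pos rfl

section Gram

variable {N : ℕ} {Λ : ℕ → ℝ}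

theorem sum_Ico_ctcoef_sq (hΛ : ∀ i, 1 ≤ i → i ≤ N → 0 < Λ i) {m n : ℕ} (hm : 1 ≤ m) (hmn : m ≤ n) (hnN : n ≤ N) :
    ∑ k ∈ Ico m n, ctcoef Λ k ^ 2 = (Lsum Λ m)⁻¹ - (Lsum Λ n)⁻¹ := by
  calc ∑ k ∈ Ico m n, ctcoef Λ k ^ 2
      = ∑ k ∈ Ico m n, (-(Lsum Λ (k + 1))⁻¹ - -(Lsum Λ k)⁻¹) := by
        refine sum_congr rfl fun k hk => ?_
        obtain ⟨hmk, hkn⟩ := mem_Ico.1 hk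
        rw [ctcoef_sq (by omega) (Lsum_pos hΛ (by omega) (by omega)) (hΛ _ (by omega) (by omega))]
        ring
    _ = (Lsum Λ m)⁻¹ - (Lsum Λ n)⁻¹ := by
        rw [sum_Ico_sub (fun k => -(Lsum Λ k)⁻¹) hmn]
        ring

theorem sum_ellMat_mul_ellMat_of_le (hΛ : ∀ i, 1 ≤ i → i ≤ N → 0 < Λ i) {i j : ℕ} (hi : 1 ≤ i) (hij : i ≤ j) (hjN : j ≤ N) :
    ∑ k ∈ Icc 1 (N - 1), ellMat Λ i k * ellMat Λ j k
      = (if i = j then (Λ i)⁻¹ else 0) - (Lsum Λ N)⁻¹ := by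
  rw [show Icc 1 (N - 1) = Ico 1 N by ext; simp only [mem_Icc, mem_Ico]; omega]
  obtain rfl | ⟨m, hm, rfl⟩ : j = 1 ∨ ∃ m, 1 ≤ m ∧ j = m + 1 :=
    (eq_or_ne j 1).imp_right fun h => ⟨j - 1, by omega, by omega⟩
  · obtain rfl : i = 1 := by omega
    rw [sum_congr rfl fun k hk => by rw [ellMat_of_le (mem_Ico.1 hk).1, ← sq],
      sum_Ico_ctcoef_sq hΛ le_rfl hjN le_rfl, Lsum_one, if_pos rfl]
  have hL : 0 < Lsum Λ m := Lsum_pos hΛ hm (by omega)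
  have hΛm : 0 < Λ (m + 1) := hΛ _ (by omega) hjN
  have below : ∑ k ∈ Ico 1 m, ellMat Λ i k * ellMat Λ (m + 1) k = 0 :=
    sum_eq_zero fun k hk => by rw [ellMat_of_succ_lt (i := m + 1) (by simp at hk; omega), mul_zero]
  have above : ∑ k ∈ Ico (m + 1) N, ellMat Λ i k * ellMat Λ (m + 1) k
      = (Lsum Λ (m + 1))⁻¹ - (Lsum Λ N)⁻¹ := by
    rw [sum_congr rfl fun k hk => by
        rw [ellMat_of_le (by simp at hk; omega), ellMat_of_le (mem_Ico.1 hk).1, ← sq],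
      sum_Ico_ctcoef_sq hΛ (by omega) hjN le_rfl]
  rw [← sum_Ico_consecutive _ hm (by omega : m ≤ N),
    ← sum_Ico_consecutive _ (Nat.le_succ m) hjN, Nat.Ico_succ_singleton, sum_singleton,
    below, above, ellMat_succ_self]
  rcases hij.eq_or_lt with rfl | hlt
  · rw [if_pos rfl, ellMat_succ_self, ← sq, ccoef_succ_sq hm hL hΛm]
    ring
  · rw [if_neg hlt.ne, ellMat_of_le (by omega), mul_comm, ccoef_succ_mul_ctcoef hm hL hΛm]
    ring

theorem sum_ellMat_mul_ellMat (hΛ : ∀ i, 1 ≤ i → i ≤ N → 0 < Λ i) {i j : ℕ} (hi : 1 ≤ i) (hiN : i ≤ N) (hj : 1 ≤ j) (hjN : j ≤ N) :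
    ∑ k ∈ Icc 1 (N - 1), ellMat Λ i k * ellMat Λ j k
      = (if i = j then (Λ i)⁻¹ else 0) - (Lsum Λ N)⁻¹ := by
  rcases le_total i j with hij | hji
  · exact sum_ellMat_mul_ellMat_of_le hΛ hi hij hjN
  · simp_rw [mul_comm (ellMat Λ i _)]
    rw [sum_ellMat_mul_ellMat_of_le hΛ hj hji hiN]
    by_cases h : i = j
    · subst h; rfl
    · rw [if_neg h, if_neg (Ne.symm h)]

end Gram

theorem stmt_18_general (N : ℕ) (Λ : ℕ → ℝ)
    (hΛ : ∀ i, 1 ≤ i → i ≤ N → 0 < Λ i)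
    (Fh Fv : ℕ → ℕ → ℝ)
    (hrow : ∀ i, 1 ≤ i → i ≤ N → ∑ j ∈ Finset.Icc 1 N, Fv i j = 0)
    (htr : ∑ i ∈ Finset.Icc 1 N, Fh i i + ∑ i ∈ Finset.Icc 1 N, Fv i i / Λ i = 0) :
    ∑ i ∈ Finset.Icc 1 N,
        ((if i = 1 then (-1 : ℝ) else 1) * Fh i i * (if i = 1 then (-1 : ℝ) else 1))
      + ∑ k ∈ Finset.Icc 1 (N - 1), ∑ i ∈ Finset.Icc 1 N, ∑ j ∈ Finset.Icc 1 N,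
          ellMat Λ i k * Fv i j * ellMat Λ j k = 0 := by
  have trace_h : ∑ i ∈ Icc 1 N,
      ((if i = 1 then (-1 : ℝ) else 1) * Fh i i * (if i = 1 then (-1 : ℝ) else 1))
      = ∑ i ∈ Icc 1 N, Fh i i :=
    sum_congr rfl fun i _ => by split_ifs <;> ring
  have trace_v : ∑ k ∈ Icc 1 (N - 1), ∑ i ∈ Icc 1 N, ∑ j ∈ Icc 1 N,
      ellMat Λ i k * Fv i j * ellMat Λ j k = ∑ i ∈ Icc 1 N, Fv i i / Λ i := by
    simp_rw [div_eq_mul_inv]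
    refine sum_sandwich_eq_of_gram _ _ _ _ _ (Lsum Λ N)⁻¹ (fun i hi j hj => ?_)
      (fun i hi => hrow i (mem_Icc.1 hi).1 (mem_Icc.1 hi).2)
    rw [mem_Icc] at hi hj
    exact sum_ellMat_mul_ellMat hΛ hi.1 hi.2 hj.1 hj.2
  rw [trace_h, trace_v, htr]

theorem stmt_18 (N : ℕ) (hN : 2 ≤ N) (Λ : ℕ → ℝ)
    (hΛ : ∀ i, 1 ≤ i → i ≤ N → 0 < Λ i)
    (Fh Fv : ℕ → ℕ → ℝ)
    (hsym : ∀ i j, 1 ≤ i → i ≤ N → 1 ≤ j → j ≤ N → Fv i j = Fv j i)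
    (hrow : ∀ i, 1 ≤ i → i ≤ N → ∑ j ∈ Finset.Icc 1 N, Fv i j = 0)
    (htr : ∑ i ∈ Finset.Icc 1 N, Fh i i + ∑ i ∈ Finset.Icc 1 N, Fv i i / Λ i = 0) :
    ∑ i ∈ Finset.Icc 1 N,
        ((if i = 1 then (-1 : ℝ) else 1) * Fh i i * (if i = 1 then (-1 : ℝ) else 1))
      + ∑ k ∈ Finset.Icc 1 (N - 1), ∑ i ∈ Finset.Icc 1 N, ∑ j ∈ Finset.Icc 1 N,
          ellMat Λ i k * Fv i j * ellMat Λ j k = 0 :=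
  stmt_18_general N Λ hΛ Fh Fv hrow htr
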